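/- arXiv:2211.12841 — 2 statements merged into one kernel-verified Lean document; each statement's English description precedes it below -/
import Mathlib

section
/- Suppose U^s = I for some integer s ≥ 1 and U^t ≠ I for all integers t with 1 ≤ t < s. If s' is a divisor of s such that some complex eigenvalue of U is a primitive s'-th root of unity, then φ(s') ≤ 2·min(n, f), where φ is Euler's totient function. -/
/-!
Write `U = AB` with the reflections `A = 2WWᵀ - 1` and `B = 2VVᵀ - 1`, and let `Ux = ξx` with
`ξ² ≠ 1`. Comparing `Bx = ξAx` after applying `Vᵀ` and `VᵀWWᵀ` shows that `Vᵀx ≠ 0` is an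
eigenvector of the rational matrix `VᵀWWᵀV = (VᵀW)(WᵀV)` for `μ = (1 + ξ)² / (4ξ)`. So
`[ℚ(μ) : ℚ] ≤ n`, and since `μ ≠ 0` is also a root of the characteristic polynomial of the
`f × f` matrix `(WᵀV)(VᵀW)`, `[ℚ(μ) : ℚ] ≤ f`. Finally `ξ` is a root of
`X² + (2 - 4μ)X + 1` over `ℚ(μ)`, so `φ(s') = [ℚ(ξ) : ℚ] ≤ 2 [ℚ(μ) : ℚ]`.
-/

open Matrix Polynomial IntermediateField

theorem IsIdempotentElem.two_nsmul_sub_one_mul_self {R : Type*} [Ring R] {Q : R}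
    (hQ : IsIdempotentElem Q) : (2 • Q - 1) * (2 • Q - 1) = 1 := by
  have h : (2 • Q - 1) * (2 • Q - 1) = 4 • (Q * Q - Q) + 1 := by noncomm_ring
  rw [h, hQ.eq, sub_self, smul_zero, zero_add]

namespace Matrix

theorem transpose_map_mul_map_eq_one {m n R S : Type*} [Fintype m] [DecidableEq n]
    [CommSemiring R] [CommSemiring S] (φ : R →+* S) {V : Matrix m n R} (hV : Vᵀ * V = 1) :
    (V.map φ)ᵀ * V.map φ = 1 := by
  rw [← transpose_map, ← Matrix.map_mul, hV, Matrix.map_one _ (map_zero φ) (map_one φ)]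

theorem isIdempotentElem_mul_transpose {m n R : Type*} [Fintype m] [Fintype n] [DecidableEq n]
    [CommSemiring R] {W : Matrix m n R} (hW : Wᵀ * W = 1) : IsIdempotentElem (W * Wᵀ) := by
  rw [IsIdempotentElem, Matrix.mul_assoc, ← Matrix.mul_assoc Wᵀ, hW, Matrix.one_mul]

theorem map_reflection_mul_reflection {m n o R S : Type*} [Fintype m] [Fintype n] [Fintype o]
    [DecidableEq m] [CommRing R] [CommRing S] (φ : R →+* S) (V : Matrix m n R)
    (W : Matrix m o R) :
    ((2 • (W * Wᵀ) - 1) * (2 • (V * Vᵀ) - 1)).map φ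
      = (2 • (W.map φ * (W.map φ)ᵀ) - 1) * (2 • (V.map φ * (V.map φ)ᵀ) - 1) := by
  change φ.mapMatrix _ = _
  rw [map_mul, map_sub, map_sub, map_nsmul, map_nsmul, map_one, RingHom.mapMatrix_apply,
    RingHom.mapMatrix_apply, Matrix.map_mul, Matrix.map_mul, transpose_map, transpose_map]

theorem exists_map_ratCast_eq {m n : Type*} (M : Matrix m n ℝ)
    (hM : ∀ i j, ∃ q : ℚ, M i j = q) :
    ∃ M' : Matrix m n ℚ, M'.map (algebraMap ℚ ℂ) = M.map Complex.ofRealHom := by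
  choose q hq using hM
  refine ⟨of q, ?_⟩
  ext i j
  rw [map_apply, map_apply, hq, of_apply, eq_ratCast]
  rfl

variable {m n : Type*} [Fintype m] [Fintype n] [DecidableEq m]

theorem isRoot_charpoly_of_mulVec_eq_smul {K : Type*} [Field K] {M : Matrix m m K} {μ : K}
    {v : m → K} (hv : v ≠ 0) (hMv : M *ᵥ v = μ • v) : M.charpoly.IsRoot μ := by
  rw [IsRoot, eval_charpoly, ← exists_mulVec_eq_zero_iff]
  refine ⟨v, hv, ?_⟩
  ext i
  simp [sub_mulVec, hMv]

theorem dvd_charpoly_mul_comm_of_isCoprime_X {R : Type*} [CommRing R] [DecidableEq n]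
    (A : Matrix m n R) (B : Matrix n m R) {p : R[X]} (hX : IsCoprime X p)
    (hp : p ∣ (A * B).charpoly) : p ∣ (B * A).charpoly := by
  have h : p ∣ X ^ Fintype.card m * (B * A).charpoly := by
    rw [← charpoly_mul_comm']
    exact hp.mul_left _
  exact hX.pow_left.symm.dvd_of_dvd_mul_left h

theorem transpose_mul_mul_mulVec_of_reflection_mul_reflection {R : Type*} [CommRing R]
    [DecidableEq n] {V : Matrix m n R} (hV : Vᵀ * V = 1) {Q : Matrix m m R}
    (hQ : IsIdempotentElem Q) {ξ : R} {x : m → R}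
    (hx : ((2 • Q - 1) * (2 • (V * Vᵀ) - 1)) *ᵥ x = ξ • x) :
    (4 * ξ) • ((Vᵀ * Q * V) *ᵥ (Vᵀ *ᵥ x)) = (1 + ξ) ^ 2 • (Vᵀ *ᵥ x) := by
  have hB : 2 • ((V * Vᵀ) *ᵥ x) - x = ξ • (2 • (Q *ᵥ x) - x) := by
    have h := congrArg ((2 • Q - 1) *ᵥ ·) hx
    simp only [mulVec_mulVec, ← Matrix.mul_assoc, hQ.two_nsmul_sub_one_mul_self, Matrix.one_mul,
      mulVec_smul] at h
    simpa only [sub_mulVec, smul_mulVec, one_mulVec] using h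
  set u := Vᵀ *ᵥ x
  set y := (Vᵀ * Q) *ᵥ x
  have hVP : Vᵀ *ᵥ ((V * Vᵀ) *ᵥ x) = u := by
    rw [mulVec_mulVec, ← Matrix.mul_assoc, hV, Matrix.one_mul]
  have hQP : (Vᵀ * Q) *ᵥ ((V * Vᵀ) *ᵥ x) = (Vᵀ * Q * V) *ᵥ u := by
    simp only [u, mulVec_mulVec, Matrix.mul_assoc]
  have hQQ : (Vᵀ * Q) *ᵥ (Q *ᵥ x) = y := by rw [mulVec_mulVec, Matrix.mul_assoc, hQ.eq]
  have h1 : 2 • u - u = ξ • (2 • y - u) := by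
    simpa only [mulVec_sub, mulVec_smul, hVP, mulVec_mulVec] using congrArg (Vᵀ *ᵥ ·) hB
  have h2 : 2 • ((Vᵀ * Q * V) *ᵥ u) - y = ξ • (2 • y - y) := by
    simpa only [mulVec_sub, mulVec_smul, hQP, hQQ] using congrArg ((Vᵀ * Q) *ᵥ ·) hB
  linear_combination (norm := module) (2 * ξ) • h2 - (1 + ξ) • h1

theorem transpose_mulVec_ne_zero_of_reflection_mul_reflection {K : Type*} [Field K]
    {V : Matrix m n K} {Q : Matrix m m K} (hQ : IsIdempotentElem Q) {ξ : K} (hξ : ξ ^ 2 ≠ 1)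
    {x : m → K} (hx0 : x ≠ 0) (hx : ((2 • Q - 1) * (2 • (V * Vᵀ) - 1)) *ᵥ x = ξ • x) :
    Vᵀ *ᵥ x ≠ 0 := by
  intro hu
  have hBx : (2 • (V * Vᵀ) - 1) *ᵥ x = -x := by
    rw [sub_mulVec, smul_mulVec, ← mulVec_mulVec, hu, mulVec_zero, smul_zero, zero_sub,
      one_mulVec]
  have hAx : (2 • Q - 1) *ᵥ x = -ξ • x := by
    rw [← mulVec_mulVec, hBx, mulVec_neg] at hx
    linear_combination (norm := module) -hx
  have hAAx : (2 • Q - 1) *ᵥ ((2 • Q - 1) *ᵥ x) = x := by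
    rw [mulVec_mulVec, hQ.two_nsmul_sub_one_mul_self, one_mulVec]
  rw [hAx, mulVec_smul, hAx, smul_smul] at hAAx
  have h : (ξ ^ 2 - 1) • x = 0 := by linear_combination (norm := module) hAAx
  exact (smul_eq_zero.mp h).elim (fun h => hξ (sub_eq_zero.mp h)) hx0

theorem isRoot_charpoly_of_reflection_mul_reflection {K : Type*} [Field K] [CharZero K]
    {o : Type*} [Fintype o] [DecidableEq n] [DecidableEq o] {V : Matrix m n K}
    {W : Matrix m o K} (hV : Vᵀ * V = 1) (hW : Wᵀ * W = 1) {ξ : K} (hξ : ξ ^ 2 ≠ 1)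
    (hξ0 : ξ ≠ 0) {x : m → K} (hx0 : x ≠ 0)
    (hx : ((2 • (W * Wᵀ) - 1) * (2 • (V * Vᵀ) - 1)) *ᵥ x = ξ • x) :
    (Vᵀ * W * (Wᵀ * V)).charpoly.IsRoot ((1 + ξ) ^ 2 / (4 * ξ)) := by
  have hQ := isIdempotentElem_mul_transpose hW
  refine isRoot_charpoly_of_mulVec_eq_smul
    (transpose_mulVec_ne_zero_of_reflection_mul_reflection hQ hξ hx0 hx) ?_
  have h4ξ : 4 * ξ ≠ 0 := mul_ne_zero (by norm_num) hξ0
  rw [div_eq_inv_mul, mul_smul,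
    ← transpose_mul_mul_mulVec_of_reflection_mul_reflection hV hQ hx, smul_smul,
    inv_mul_cancel₀ h4ξ, one_smul]
  simp only [Matrix.mul_assoc]

end Matrix

section Minpoly

variable {F K : Type*} [Field F] [Field K] [Algebra F K]

theorem isIntegral_and_minpoly_dvd_charpoly_of_isRoot {n : Type*} [Fintype n] [DecidableEq n]
    (M : Matrix n n F) {μ : K} (hμ : (M.map (algebraMap F K)).charpoly.IsRoot μ) :
    IsIntegral F μ ∧ minpoly F μ ∣ M.charpoly := by
  have h : aeval μ M.charpoly = 0 := by
    rwa [aeval_def, eval₂_eq_eval_map, ← charpoly_map]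
  exact ⟨⟨_, M.charpoly_monic, h⟩, minpoly.dvd F μ h⟩

theorem isCoprime_X_map_minpoly {μ : K} (hμ : IsIntegral F μ) (hμ0 : μ ≠ 0) :
    IsCoprime X ((minpoly F μ).map (algebraMap F K)) := by
  rw [irreducible_X.coprime_iff_not_dvd, X_dvd_iff, coeff_map]
  exact (map_ne_zero_iff _ (algebraMap F K).injective).mpr (minpoly.coeff_zero_ne_zero hμ hμ0)

variable {m n : Type*} [Fintype m] [Fintype n] [DecidableEq m] [DecidableEq n]

theorem natDegree_minpoly_le_card_of_isRoot (M : Matrix m m F) {μ : K}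
    (hμ : (M.map (algebraMap F K)).charpoly.IsRoot μ) :
    (minpoly F μ).natDegree ≤ Fintype.card m := by
  have h := natDegree_le_of_dvd (isIntegral_and_minpoly_dvd_charpoly_of_isRoot M hμ).2
    M.charpoly_monic.ne_zero
  rwa [charpoly_natDegree_eq_dim] at h

theorem natDegree_minpoly_le_card_of_isRoot_mul (M : Matrix m m F) (A : Matrix m n K)
    (B : Matrix n m K) (hM : M.map (algebraMap F K) = A * B) {μ : K} (hμ0 : μ ≠ 0)
    (hμ : (A * B).charpoly.IsRoot μ) : (minpoly F μ).natDegree ≤ Fintype.card n := by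
  rw [← hM] at hμ
  obtain ⟨hint, hdvd⟩ := isIntegral_and_minpoly_dvd_charpoly_of_isRoot M hμ
  have hdvd' : (minpoly F μ).map (algebraMap F K) ∣ (B * A).charpoly := by
    refine dvd_charpoly_mul_comm_of_isCoprime_X A B (isCoprime_X_map_minpoly hint hμ0) ?_
    rw [← hM, charpoly_map]
    exact Polynomial.map_dvd _ hdvd
  have h := natDegree_le_of_dvd hdvd' (B * A).charpoly_monic.ne_zero
  rwa [charpoly_natDegree_eq_dim, natDegree_map] at h

end Minpoly

theorem IntermediateField.natDegree_minpoly_le_mul {F E : Type*} [Field F] [Field E]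
    [Algebra F E] {a b : E} (ha : IsIntegral F a) (hb : IsIntegral F⟮a⟯ b) :
    (minpoly F b).natDegree ≤ (minpoly F a).natDegree * (minpoly F⟮a⟯ b).natDegree := by
  have := adjoin.finiteDimensional ha
  have := adjoin.finiteDimensional hb
  have : Module.Free F⟮a⟯ F⟮a⟯⟮b⟯ := Module.Free.of_divisionRing _ _
  have : Module.Finite F F⟮a⟯⟮b⟯ := Module.Finite.trans F⟮a⟯ _
  have : IsScalarTower F F⟮a⟯⟮b⟯ E := IsScalarTower.of_algebraMap_eq fun _ => rfl
  have hb' : minpoly F (⟨b, mem_adjoin_simple_self _ b⟩ : F⟮a⟯⟮b⟯) = minpoly F b :=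
    (minpoly.algebraMap_eq (algebraMap F⟮a⟯⟮b⟯ E).injective _).symm
  rw [← adjoin.finrank ha, ← adjoin.finrank hb, Module.finrank_mul_finrank F F⟮a⟯ F⟮a⟯⟮b⟯, ← hb']
  exact minpoly.natDegree_le _

theorem natDegree_minpoly_le_of_four_mul_mul_eq_sq {F E : Type*} [Field F] [Field E]
    [Algebra F E] {a b : E} (ha : IsIntegral F a) (h : 4 * a * b = (1 + b) ^ 2) :
    (minpoly F b).natDegree ≤ (minpoly F a).natDegree * 2 := by
  set p : F⟮a⟯[X] := X ^ 2 + (C (2 - 4 * ⟨a, mem_adjoin_simple_self F a⟩) * X + 1)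
  have hp : p.Monic := monic_X_pow_add (by compute_degree!)
  have hpb : aeval b p = 0 := by
    simp only [p, map_add, map_pow, map_mul, aeval_X, aeval_C, map_one, map_sub, map_ofNat,
      IntermediateField.algebraMap_apply]
    linear_combination h.symm
  refine (natDegree_minpoly_le_mul ha ⟨p, hp, hpb⟩).trans (Nat.mul_le_mul_left _ ?_)
  calc (minpoly F⟮a⟯ b).natDegree ≤ p.natDegree := natDegree_le_natDegree (minpoly.min _ _ hp hpb)
    _ = 2 := by simp only [p]; compute_degree!

theorem stmt_13_general (k n f : ℕ) (hn : 0 < n) (hf : 0 < f)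
    (V : Matrix (Fin k) (Fin n) ℝ) (W : Matrix (Fin k) (Fin f) ℝ)
    (hV : Vᵀ * V = 1) (hW : Wᵀ * W = 1)
    (U : Matrix (Fin k) (Fin k) ℝ)
    (hU : U = (2 • (W * Wᵀ) - 1) * (2 • (V * Vᵀ) - 1))
    (hrat : ∀ i j : Fin n, ∃ q : ℚ, (Vᵀ * W * Wᵀ * V) i j = (q : ℝ))
    (s' : ℕ)
    (hroot : ∃ ξ : ℂ, (∃ x : Fin k → ℂ, x ≠ 0 ∧
        (U.map (Complex.ofReal)) *ᵥ x = ξ • x) ∧ IsPrimitiveRoot ξ s') :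
    Nat.totient s' ≤ 2 * min n f := by
  obtain ⟨ξ, ⟨x, hx0, hx⟩, hprim⟩ := hroot
  rcases le_or_gt s' 2 with hs' | hs'
  · have : s'.totient ≤ 1 := by interval_cases s' <;> simp
    omega
  have hξ : ξ ^ 2 ≠ 1 := hprim.pow_ne_one_of_pos_of_lt two_ne_zero hs'
  have hξ0 : ξ ≠ 0 := hprim.ne_zero (by omega)
  set Vc := V.map Complex.ofRealHom
  set Wc := W.map Complex.ofRealHom
  replace hx : ((2 • (Wc * Wcᵀ) - 1) * (2 • (Vc * Vcᵀ) - 1)) *ᵥ x = ξ • x := by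
    rw [← map_reflection_mul_reflection, ← hU]
    exact hx
  have hroot := isRoot_charpoly_of_reflection_mul_reflection (transpose_map_mul_map_eq_one _ hV)
    (transpose_map_mul_map_eq_one _ hW) hξ hξ0 hx0 hx
  set μ := (1 + ξ) ^ 2 / (4 * ξ)
  obtain ⟨M, hM⟩ := exists_map_ratCast_eq _ hrat
  replace hM : M.map (algebraMap ℚ ℂ) = Vcᵀ * Wc * (Wcᵀ * Vc) := by
    simp only [hM, Vc, Wc, ← transpose_map, Matrix.map_mul, Matrix.mul_assoc]
  have hμ0 : μ ≠ 0 :=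
    div_ne_zero (pow_ne_zero 2 fun h => hξ (by linear_combination (ξ - 1) * h)) (by simpa)
  have hdn := natDegree_minpoly_le_card_of_isRoot M (hM ▸ hroot)
  have hdf := natDegree_minpoly_le_card_of_isRoot_mul _ _ _ hM hμ0 hroot
  have hdeg := natDegree_minpoly_le_of_four_mul_mul_eq_sq (b := ξ)
    (isIntegral_and_minpoly_dvd_charpoly_of_isRoot M (hM ▸ hroot)).1
    (by simp only [μ]; field_simp)
  rw [← cyclotomic_eq_minpoly_rat hprim (by omega), natDegree_cyclotomic] at hdeg
  rw [Fintype.card_fin] at hdn hdf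
  omega

theorem stmt_13 (k n f : ℕ) (hk : 0 < k) (hn : 0 < n) (hf : 0 < f)
    (V : Matrix (Fin k) (Fin n) ℝ) (W : Matrix (Fin k) (Fin f) ℝ)
    (hV : Vᵀ * V = 1) (hW : Wᵀ * W = 1)
    (U : Matrix (Fin k) (Fin k) ℝ)
    (hU : U = (2 • (W * Wᵀ) - 1) * (2 • (V * Vᵀ) - 1))
    (hrat : ∀ i j : Fin n, ∃ q : ℚ, (Vᵀ * W * Wᵀ * V) i j = (q : ℝ))
    (s : ℕ) (hs : 1 ≤ s) (hUs : U ^ s = 1)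
    (hmin : ∀ t : ℕ, 1 ≤ t → t < s → U ^ t ≠ 1)
    (s' : ℕ) (hdvd : s' ∣ s)
    (hroot : ∃ ξ : ℂ, (∃ x : Fin k → ℂ, x ≠ 0 ∧
        (U.map (Complex.ofReal)) *ᵥ x = ξ • x) ∧ IsPrimitiveRoot ξ s') :
    Nat.totient s' ≤ 2 * min n f :=
  stmt_13_general k n f hn hf V W hV hW U hU hrat s' hroot
end

section
/- Let u ≠ v be elements of 𝒱 whose columns in N have equal (positive) sum d. Then U(N̂ e_u) = N̂ e_v if and only if 𝒱 has exactly two elements; that is, perfect state transfer at time 1 occurs precisely when 𝒱 = {u, v}. -/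
/-!
The columns of `N̂` are orthonormal, so `Q` and `P` are orthogonal projections, and `U² = 1`
forces them to commute. Hence for `x = N̂ e_u`, which `Q` fixes, `P x` lies in both column spaces
and is a constant vector `c 𝟙`; since `P` is symmetric with `P 𝟙 = 𝟙` it preserves coordinate
sums, so `c |A| = √d`. Thus `U x = 2c 𝟙 - x`, and `U x = N̂ e_v` says that
`N a u + N a v = 2d / |A|` for every `a`, which happens exactly when every row of `N` has its `1`
in column `u` or `v`.
-/

open Matrix

section Reflections

variable {R : Type*} [Ring R]

lemma IsIdempotentElem.two_nsmul_sub_one_mul_self_s16 {p : R} (hp : IsIdempotentElem p) :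
    (2 • p - 1) * (2 • p - 1) = 1 := by
  have h : (2 • p - 1) * (2 • p - 1) = 4 • (p * p) - 4 • p + 1 := by noncomm_ring
  rw [h, hp.eq]
  abel

lemma commute_of_mul_self_eq_one {r s : R} (hr : r * r = 1) (hs : s * s = 1)
    (hrs : (r * s) ^ 2 = 1) : Commute r s := by
  calc r * s = r * ((r * s) ^ 2) * s := by rw [hrs, mul_one]
    _ = (r * r) * (s * r) * (s * s) := by noncomm_ring
    _ = s * r := by rw [hr, hs, one_mul, mul_one]

lemma IsIdempotentElem.commute_of_reflections_mul_sq_eq_one [IsAddTorsionFree R] {p q : R}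
    (hp : IsIdempotentElem p) (hq : IsIdempotentElem q)
    (h : ((2 • p - 1) * (2 • q - 1)) ^ 2 = 1) : Commute p q := by
  have hrs := commute_of_mul_self_eq_one hp.two_nsmul_sub_one_mul_self_s16
    hq.two_nsmul_sub_one_mul_self_s16 h
  have h4 : 4 • (p * q) = 4 • (q * p) := by
    have e : (2 • p - 1) * (2 • q - 1) - (2 • q - 1) * (2 • p - 1)
        = 4 • (p * q) - 4 • (q * p) := by noncomm_ring
    rw [hrs.eq, sub_self] at e
    exact (sub_eq_zero.mp e.symm)
  exact nsmul_right_injective (by norm_num) h4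

end Reflections

lemma Matrix.sum_mulVec_of_transpose_mulVec_one {n R : Type*} [Fintype n] [CommSemiring R]
    {P : Matrix n n R} (hP : Pᵀ *ᵥ 1 = 1) (x : n → R) :
    ∑ i, (P *ᵥ x) i = ∑ i, x i := by
  rw [← one_dotProduct, ← one_dotProduct, dotProduct_mulVec, ← mulVec_transpose, hP]

lemma Matrix.isIdempotentElem_mul_transpose_s16 {m n R : Type*} [Fintype m] [Fintype n]
    [DecidableEq n] [CommSemiring R] {Y : Matrix m n R} (hY : Yᵀ * Y = 1) :
    IsIdempotentElem (Y * Yᵀ) := by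
  rw [IsIdempotentElem, Matrix.mul_assoc, ← Matrix.mul_assoc Yᵀ Y, hY, Matrix.one_mul]

lemma Matrix.reflection_mul_reflection_mulVec {n R : Type*} [Fintype n] [DecidableEq n]
    [Ring R] {P Q : Matrix n n R} {x : n → R} (hx : Q *ᵥ x = x) :
    ((2 • P - 1) * (2 • Q - 1)) *ᵥ x = 2 • (P *ᵥ x) - x := by
  have hx' : (2 • Q - 1) *ᵥ x = x := by
    rw [sub_mulVec, smul_mulVec, hx, one_mulVec, two_nsmul, add_sub_cancel_right]
  rw [← mulVec_mulVec, hx', sub_mulVec, smul_mulVec, one_mulVec]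

lemma Matrix.exists_mulVec_eq_const {n : Type*} [Fintype n] {P Q : Matrix n n ℝ}
    (hPQ : Commute P Q) (hP : Pᵀ *ᵥ 1 = 1)
    (hinter : ∀ x, (∃ y, P *ᵥ y = x) → (∃ z, Q *ᵥ z = x) → ∃ c : ℝ, x = fun _ => c)
    {x : n → ℝ} (hx : Q *ᵥ x = x) :
    ∃ c : ℝ, P *ᵥ x = (fun _ => c) ∧ c * Fintype.card n = ∑ i, x i := by
  obtain ⟨c, hc⟩ := hinter (P *ᵥ x) ⟨x, rfl⟩
    ⟨P *ᵥ x, by rw [mulVec_mulVec, ← hPQ.eq, ← mulVec_mulVec, hx]⟩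
  refine ⟨c, hc, ?_⟩
  rw [← sum_mulVec_of_transpose_mulVec_one hP x, hc]
  simp [mul_comm]

section PartitionMatrix

variable {A V : Type*}

structure IsPartitionMatrix (X : Matrix A V ℝ) : Prop where
  zero_or_one : ∀ a w, X a w = 0 ∨ X a w = 1
  existsUnique_eq_one : ∀ a, ∃! w, X a w = 1

noncomputable def normalizeCols [Fintype A] [Fintype V] [DecidableEq V] (X : Matrix A V ℝ) :
    Matrix A V ℝ :=
  X * diagonal (fun w => (√((Xᵀ * X) w w))⁻¹)

namespace IsPartitionMatrix

variable {X : Matrix A V ℝ} (hX : IsPartitionMatrix X)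
include hX

lemma eq_zero_of_eq_one {a : A} {w w' : V} (ha : X a w = 1) (hw : w' ≠ w) : X a w' = 0 :=
  (hX.zero_or_one a w').resolve_right fun h =>
    hw ((hX.existsUnique_eq_one a).unique h ha)

lemma exists_eq_one_of_sum_pos [Fintype A] {w : V} (h : 0 < ∑ a, X a w) :
    ∃ a, X a w = 1 := by
  by_contra! hne
  simp [fun a => (hX.zero_or_one a w).resolve_right (hne a)] at h

lemma mulVec_one [Fintype V] : X *ᵥ 1 = 1 := by
  ext a
  obtain ⟨w, hw, -⟩ := hX.existsUnique_eq_one a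
  rw [mulVec, dotProduct,
    Finset.sum_eq_single w (fun w' _ h => by simp [hX.eq_zero_of_eq_one hw h]) (by simp)]
  simp [hw]

lemma transpose_mul_self [Fintype A] [DecidableEq V] :
    Xᵀ * X = diagonal (fun w => ∑ a, X a w) := by
  ext w w'
  rw [mul_apply]
  by_cases h : w = w'
  · subst h
    rw [diagonal_apply_eq]
    refine Finset.sum_congr rfl fun a _ => ?_
    rcases hX.zero_or_one a w with h | h <;> simp [h]
  · rw [diagonal_apply_ne _ h]
    refine Finset.sum_eq_zero fun a _ => ?_
    rcases hX.zero_or_one a w with h' | h'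
    · simp [h']
    · simp [hX.eq_zero_of_eq_one h' (Ne.symm h)]

section Normalize

variable [Fintype A] [Fintype V] [DecidableEq V]

lemma normalizeCols_eq :
    normalizeCols X = X * diagonal (fun w => (√(∑ a, X a w))⁻¹) := by
  simp only [normalizeCols, hX.transpose_mul_self, diagonal_apply_eq]

lemma normalizeCols_mulVec_single (w : V) :
    normalizeCols X *ᵥ Pi.single w 1 = (√(∑ a, X a w))⁻¹ • X.col w := by
  ext a
  simp [hX.normalizeCols_eq, mul_comm]

lemma sum_normalizeCols_mulVec_single (w : V) :
    ∑ a, (normalizeCols X *ᵥ Pi.single w 1) a = √(∑ a, X a w) := by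
  simp only [hX.normalizeCols_mulVec_single, Pi.smul_apply, col_apply, smul_eq_mul,
    inv_mul_eq_div, ← Finset.sum_div, Real.div_sqrt]

lemma transpose_normalizeCols_mul_self (hcol : ∀ w, 0 < ∑ a, X a w) :
    (normalizeCols X)ᵀ * normalizeCols X = 1 := by
  rw [hX.normalizeCols_eq, transpose_mul, diagonal_transpose, Matrix.mul_assoc,
    ← Matrix.mul_assoc Xᵀ, hX.transpose_mul_self, diagonal_mul_diagonal, diagonal_mul_diagonal,
    ← diagonal_one]
  congr 1
  ext w
  have hs := Real.sq_sqrt (hcol w).le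
  have : √(∑ a, X a w) ≠ 0 := (Real.sqrt_pos.mpr (hcol w)).ne'
  field_simp
  linarith

lemma normalizeCols_mul_transpose_mulVec_one (hcol : ∀ w, 0 < ∑ a, X a w) :
    (normalizeCols X * (normalizeCols X)ᵀ) *ᵥ 1 = 1 := by
  have key : diagonal (fun w => (√(∑ a, X a w))⁻¹) *ᵥ
      (diagonal (fun w => (√(∑ a, X a w))⁻¹) *ᵥ (Xᵀ *ᵥ 1)) = 1 := by
    ext w
    have : √(∑ a, X a w) ≠ 0 := (Real.sqrt_pos.mpr (hcol w)).ne'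
    have hs := Real.sq_sqrt (hcol w).le
    rw [mulVec_diagonal, mulVec_diagonal]
    simp only [mulVec, dotProduct, transpose_apply, Pi.one_apply, mul_one]
    field_simp
    exact hs.symm
  rw [← mulVec_mulVec, hX.normalizeCols_eq, transpose_mul, diagonal_transpose, ← mulVec_mulVec,
    ← mulVec_mulVec, key, hX.mulVec_one]

end Normalize

section Columns

variable [Fintype A] (hcol : ∀ w, 0 < ∑ a, X a w)
include hcol

lemma forall_add_eq_one_iff {u v : V} (huv : u ≠ v) :
    (∀ a, X a u + X a v = 1) ↔ ∀ w, w = u ∨ w = v := by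
  constructor
  · intro h w
    by_contra! hw
    obtain ⟨a, ha⟩ := hX.exists_eq_one_of_sum_pos (hcol w)
    simpa [hX.eq_zero_of_eq_one ha hw.1.symm, hX.eq_zero_of_eq_one ha hw.2.symm] using h a
  · intro h a
    obtain ⟨w, hw, -⟩ := hX.existsUnique_eq_one a
    rcases h w with rfl | rfl
    · simp [hw, hX.eq_zero_of_eq_one hw huv.symm]
    · simp [hw, hX.eq_zero_of_eq_one hw huv]

lemma forall_add_eq_iff {u v : V} (huv : u ≠ v) {d k : ℝ} (hu : ∑ a, X a u = d)
    (hv : ∑ a, X a v = d) (hk : k * Fintype.card A = 2 * d) :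
    (∀ a, X a u + X a v = k) ↔ ∀ w, w = u ∨ w = v := by
  have hd : 0 < d := hu ▸ hcol u
  rw [← hX.forall_add_eq_one_iff hcol huv]
  constructor
  · intro h a
    have hk0 : k ≠ 0 := by
      rintro rfl
      linarith
    rcases hX.zero_or_one a u with hu0 | hu1
    · rcases hX.zero_or_one a v with hv0 | hv1
      · exact absurd (by simpa [hu0, hv0] using (h a).symm) hk0
      · simp [hu0, hv1]
    · simp [hu1, hX.eq_zero_of_eq_one hu1 huv.symm]
  · intro h a
    have hcard : (Fintype.card A : ℝ) = 2 * d := calc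
      (Fintype.card A : ℝ) = ∑ a, (X a u + X a v) := by simp [h]
      _ = 2 * d := by rw [Finset.sum_add_distrib, hu, hv, two_mul]
    rw [hcard] at hk
    rw [h a]
    exact (mul_right_cancel₀ (by positivity) (hk.trans (one_mul _).symm)).symm

end Columns

end IsPartitionMatrix

end PartitionMatrix

theorem stmt_16_general (A 𝒱 ℱ : Type*) [Fintype A] [Fintype 𝒱] [Fintype ℱ]
    [DecidableEq A] [DecidableEq 𝒱] [DecidableEq ℱ]
    (N : Matrix A 𝒱 ℝ) (M : Matrix A ℱ ℝ)
    (hN01 : ∀ a w, N a w = 0 ∨ N a w = 1)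
    (hNrow : ∀ a : A, ∃! w : 𝒱, N a w = 1)
    (hNcol : ∀ w : 𝒱, 0 < ∑ a : A, N a w)
    (hM01 : ∀ a f, M a f = 0 ∨ M a f = 1)
    (hMrow : ∀ a : A, ∃! f : ℱ, M a f = 1)
    (hMcol : ∀ f : ℱ, 0 < ∑ a : A, M a f)
    (Nhat : Matrix A 𝒱 ℝ)
    (hNhat : Nhat = N * Matrix.diagonal (fun w => (Real.sqrt ((Nᵀ * N) w w))⁻¹))
    (Mhat : Matrix A ℱ ℝ)
    (hMhat : Mhat = M * Matrix.diagonal (fun f => (Real.sqrt ((Mᵀ * M) f f))⁻¹))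
    (Q P U : Matrix A A ℝ)
    (hQ : Q = Nhat * Nhatᵀ) (hP : P = Mhat * Mhatᵀ)
    (hU : U = (2 • P - 1) * (2 • Q - 1))
    (hinter : ∀ x : A → ℝ,
      ((∃ y : A → ℝ, P *ᵥ y = x) ∧ (∃ z : A → ℝ, Q *ᵥ z = x)) ↔
        ∃ c : ℝ, x = fun _ => c)
    (hU2 : U ^ 2 = 1)
    (u v : 𝒱) (huv : u ≠ v) (d : ℕ)
    (hNu : ∑ a : A, N a u = d) (hNv : ∑ a : A, N a v = d) :
    U *ᵥ (Nhat *ᵥ Pi.single u 1) = Nhat *ᵥ Pi.single v 1 ↔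
      ∀ w : 𝒱, w = u ∨ w = v := by
  have hN : IsPartitionMatrix N := ⟨hN01, hNrow⟩
  have hM : IsPartitionMatrix M := ⟨hM01, hMrow⟩
  change Nhat = normalizeCols N at hNhat
  change Mhat = normalizeCols M at hMhat
  have hNN : Nhatᵀ * Nhat = 1 := hNhat ▸ hN.transpose_normalizeCols_mul_self hNcol
  have hMM : Mhatᵀ * Mhat = 1 := hMhat ▸ hM.transpose_normalizeCols_mul_self hMcol
  have : IsAddTorsionFree (Matrix A A ℝ) := .of_module_rat _
  have hPQ : Commute P Q :=
    (hP ▸ isIdempotentElem_mul_transpose_s16 hMM).commute_of_reflections_mul_sq_eq_one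
      (hQ ▸ isIdempotentElem_mul_transpose_s16 hNN) (hU ▸ hU2)
  have hP1 : Pᵀ *ᵥ 1 = 1 := by
    rw [hP, transpose_mul, transpose_transpose, hMhat]
    exact hM.normalizeCols_mul_transpose_mulVec_one hMcol
  have hQx : Q *ᵥ (Nhat *ᵥ Pi.single u 1) = Nhat *ᵥ Pi.single u 1 := by
    rw [hQ, mulVec_mulVec, Matrix.mul_assoc, hNN, Matrix.mul_one]
  obtain ⟨c, hc, hcA⟩ :=
    exists_mulVec_eq_const hPQ hP1 (fun x hy hz => (hinter x).1 ⟨hy, hz⟩) hQx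
  rw [hNhat, hN.sum_normalizeCols_mulVec_single, hNu] at hcA
  have hsqrt : √(d : ℝ) * √d = d := Real.mul_self_sqrt d.cast_nonneg
  have hsqrt0 : √(d : ℝ) ≠ 0 := Real.sqrt_ne_zero'.mpr (hNu ▸ hNcol u)
  rw [hU, reflection_mul_reflection_mulVec hQx, hc, hNhat, hN.normalizeCols_mulVec_single,
    hN.normalizeCols_mulVec_single, hNu, hNv, ← hN.forall_add_eq_iff hNcol huv hNu hNv
    (k := 2 * c * √d) (by linear_combination 2 * √(d : ℝ) * hcA + 2 * hsqrt), funext_iff]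
  refine forall_congr' fun a => ?_
  simp only [Pi.sub_apply, Pi.smul_apply, col_apply]
  simp only [smul_eq_mul, nsmul_eq_mul, Nat.cast_ofNat]
  field_simp
  constructor <;> intro <;> linarith

theorem stmt_16 (A 𝒱 ℱ : Type*) [Fintype A] [Fintype 𝒱] [Fintype ℱ]
    [DecidableEq A] [DecidableEq 𝒱] [DecidableEq ℱ]
    [Nonempty A] [Nonempty 𝒱] [Nonempty ℱ]
    (N : Matrix A 𝒱 ℝ) (M : Matrix A ℱ ℝ)
    (hN01 : ∀ a w, N a w = 0 ∨ N a w = 1)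
    (hNrow : ∀ a : A, ∃! w : 𝒱, N a w = 1)
    (hNcol : ∀ w : 𝒱, 0 < ∑ a : A, N a w)
    (hM01 : ∀ a f, M a f = 0 ∨ M a f = 1)
    (hMrow : ∀ a : A, ∃! f : ℱ, M a f = 1)
    (hMcol : ∀ f : ℱ, 0 < ∑ a : A, M a f)
    (Nhat : Matrix A 𝒱 ℝ)
    (hNhat : Nhat = N * Matrix.diagonal (fun w => (Real.sqrt ((Nᵀ * N) w w))⁻¹))
    (Mhat : Matrix A ℱ ℝ)
    (hMhat : Mhat = M * Matrix.diagonal (fun f => (Real.sqrt ((Mᵀ * M) f f))⁻¹))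
    (Q P U : Matrix A A ℝ)
    (hQ : Q = Nhat * Nhatᵀ) (hP : P = Mhat * Mhatᵀ)
    (hU : U = (2 • P - 1) * (2 • Q - 1))
    (hinter : ∀ x : A → ℝ,
      ((∃ y : A → ℝ, P *ᵥ y = x) ∧ (∃ z : A → ℝ, Q *ᵥ z = x)) ↔
        ∃ c : ℝ, x = fun _ => c)
    (hU2 : U ^ 2 = 1)
    (u v : 𝒱) (huv : u ≠ v) (d : ℕ) (hd : 0 < d)
    (hNu : ∑ a : A, N a u = d) (hNv : ∑ a : A, N a v = d) :
    U *ᵥ (Nhat *ᵥ Pi.single u 1) = Nhat *ᵥ Pi.single v 1 ↔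
      ∀ w : 𝒱, w = u ∨ w = v :=
  stmt_16_general A 𝒱 ℱ N M hN01 hNrow hNcol hM01 hMrow hMcol Nhat hNhat Mhat hMhat Q P U hQ hP hU
    hinter hU2 u v huv d hNu hNv
end
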